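/- Let B : [0,1] → ℝ be continuous with B(0) = 0, let u, v be B-solutions with u(0) = 0, u(1) = 1, v(0) = 1, v(1) = 0, with nonzero constant Wronskian α, and let T be the associated Green operator. If e ∈ H1, β ∈ ℝ with β ≠ 0, and (Te)(x) = β·e(x) for all x ∈ [0,1], then for every h ∈ H1: E(e, h) = β^{-1}·∫_0^1 e(x)h(x) dx. That is, 1/β is an eigenvalue of the random Schrödinger operator L with eigenfunction e. -/

import Mathlib

/-!
Put `W = Te`. Then `W` is `C¹`, and since the Wronskian of `u` and `v` is constant, its
quasi-derivative `W' - W B` has derivative `-(B W' + e)`; integrating by parts against `h ∈ H1`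
(whose boundary values vanish) gives Green's identity `E(Te, h) = ∫ e h`. The eigen-equation
makes `e = β⁻¹ W` on `[0,1]`, so `e` is `C¹` and, by the Lebesgue differentiation theorem, its
`H1`-derivative `ge` agrees a.e. with `β⁻¹ W'`. Hence `E(e, h) = β⁻¹ E(Te, h) = β⁻¹ ∫ e h`.
-/

open MeasureTheory intervalIntegral

/-- `u` is a pathwise (`B`-)solution of the homogeneous equation `-u'' + B'·u = 0`. -/
def IsBSolution (B u u' : ℝ → ℝ) : Prop :=
  (∀ x ∈ Set.Icc (0:ℝ) 1, HasDerivWithinAt u (u' x) (Set.Icc 0 1) x) ∧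
  ContinuousOn u' (Set.Icc 0 1) ∧
  ∀ x ∈ Set.Icc (0:ℝ) 1, u' x = u' 0 + u x * B x - ∫ y in (0:ℝ)..x, u' y * B y

/-- `h` belongs to `H1` with (a.e.) derivative `g`: `h` is absolutely continuous on
`[0,1]` with `h(0) = h(1) = 0`, i.e. `h(x) = ∫_0^x g` for an integrable `g` with
`∫_0^1 g = 0`. -/
def MemH1 (h g : ℝ → ℝ) : Prop :=
  MeasureTheory.IntegrableOn g (Set.Icc 0 1) ∧
  (∫ t in (0:ℝ)..1, g t) = 0 ∧
  ∀ x ∈ Set.Icc (0:ℝ) 1, h x = ∫ t in (0:ℝ)..x, g t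

/-- The pathwise bilinear form `E(f,h)`, the weak meaning of `⟨Lf, h⟩` for
`L = -d²/dx² + B'`; here `f'` and `h'` are the derivatives of `f` and `h`. -/
noncomputable def Eform (B f f' h h' : ℝ → ℝ) : ℝ :=
  (∫ x in (0:ℝ)..1, f' x * h' x) -
    ∫ x in (0:ℝ)..1, (f' x * h x + f x * h' x) * B x

/-- The Green operator `T` built from the independent solutions `u`, `v` and the
Wronskian `α`: `(Tf)(x) = α⁻¹·(v(x)·∫_0^x u f + u(x)·∫_x^1 v f)`. -/
noncomputable def greenOp (α : ℝ) (u v f : ℝ → ℝ) (x : ℝ) : ℝ :=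
  α⁻¹ * (v x * (∫ y in (0:ℝ)..x, u y * f y) + u x * (∫ y in x..(1:ℝ), v y * f y))

/-- The derivative of `Tf`:
`(Tf)'(x) = α⁻¹·(v'(x)·∫_0^x u f + u'(x)·∫_x^1 v f)`. -/
noncomputable def greenOpDeriv (α : ℝ) (u u' v v' f : ℝ → ℝ) (x : ℝ) : ℝ :=
  α⁻¹ * (v' x * (∫ y in (0:ℝ)..x, u y * f y) + u' x * (∫ y in x..(1:ℝ), v y * f y))

open Set

section Calculus

variable {a b : ℝ}

theorem hasDerivWithinAt_integral_Icc {c : ℝ → ℝ} (hc : ContinuousOn c (Icc a b))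
    {x : ℝ} (hx : x ∈ Icc a b) :
    HasDerivWithinAt (fun z => ∫ y in a..z, c y) (c x) (Icc a b) x := by
  have : Fact (x ∈ Icc a b) := ⟨hx⟩
  have hsub : uIcc a x ⊆ Icc a b := by
    rw [uIcc_of_le hx.1]; exact Icc_subset_Icc le_rfl hx.2
  exact integral_hasDerivWithinAt_right ((hc.mono hsub).intervalIntegrable)
    (hc.stronglyMeasurableAtFilter_nhdsWithin measurableSet_Icc x) (hc x hx)

theorem hasDerivWithinAt_integral_Icc_left {c : ℝ → ℝ} (hc : ContinuousOn c (Icc a b))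
    {x : ℝ} (hx : x ∈ Icc a b) :
    HasDerivWithinAt (fun z => ∫ y in z..b, c y) (-c x) (Icc a b) x := by
  have hab : a ≤ b := hx.1.trans hx.2
  have hint : ∀ z ∈ Icc a b, IntervalIntegrable c volume a z := fun z hz =>
    (hc.mono (by rw [uIcc_of_le hz.1]; exact Icc_subset_Icc le_rfl hz.2)).intervalIntegrable
  have hsplit : ∀ z ∈ Icc a b, (∫ y in z..b, c y) = (∫ y in a..b, c y) - ∫ y in a..z, c y :=
    fun z hz => (integral_interval_sub_left (hint b ⟨hab, le_rfl⟩) (hint z hz)).symm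
  exact ((hasDerivWithinAt_integral_Icc hc hx).const_sub _).congr hsplit (hsplit x hx)

theorem absolutelyContinuousOnInterval_of_hasDerivWithinAt {φ D : ℝ → ℝ} (hab : a ≤ b)
    (hφ : ∀ x ∈ Icc a b, HasDerivWithinAt φ (D x) (Icc a b) x)
    (hD : ContinuousOn D (Icc a b)) : AbsolutelyContinuousOnInterval φ a b := by
  obtain ⟨C, hC⟩ := isCompact_Icc.exists_bound_of_continuousOn hD
  apply LipschitzOnWith.absolutelyContinuousOnInterval (K := C.toNNReal)
  rw [uIcc_of_le hab]
  refine (convex_Icc a b).lipschitzOnWith_of_nnnorm_hasDerivWithin_le hφ fun x hx => ?_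
  rw [← NNReal.coe_le_coe, coe_nnnorm]
  exact (hC x hx).trans (Real.le_coe_toNNReal C)

theorem integral_mul_eq_sub_integral_mul_primitive {φ D g : ℝ → ℝ} (hab : a ≤ b)
    (hφ : ∀ x ∈ Icc a b, HasDerivWithinAt φ (D x) (Icc a b) x)
    (hD : ContinuousOn D (Icc a b)) (hg : IntervalIntegrable g volume a b) :
    ∫ x in a..b, φ x * g x =
      φ b * (∫ x in a..b, g x) - ∫ x in a..b, D x * ∫ t in a..x, g t := by
  have hG := hg.absolutelyContinuousOnInterval_intervalIntegral (c := a) left_mem_uIcc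
  have hparts := (absolutelyContinuousOnInterval_of_hasDerivWithinAt hab hφ hD)
    |>.integral_mul_deriv_eq_deriv_mul hG
  have hderiv_G : ∀ᵐ x, x ∈ uIoc a b →
      φ x * deriv (fun z => ∫ t in a..z, g t) x = φ x * g x := by
    filter_upwards [hg.ae_hasDerivAt_integral] with x hx hxI
    rw [(hx (uIoc_subset_uIcc hxI) a left_mem_uIcc).deriv]
  have hderiv_φ : ∀ᵐ x, x ∈ uIoc a b →
      deriv φ x * (∫ t in a..x, g t) = D x * ∫ t in a..x, g t := by
    filter_upwards [Measure.ae_ne volume b] with x hxb hxI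
    rw [uIoc_of_le hab] at hxI
    have hxI' : x ∈ Ioo a b := ⟨hxI.1, lt_of_le_of_ne hxI.2 hxb⟩
    rw [((hφ x (Ioo_subset_Icc_self hxI')).hasDerivAt (Icc_mem_nhds hxI'.1 hxI'.2)).deriv]
  rw [integral_congr_ae hderiv_G, integral_congr_ae hderiv_φ, integral_same, mul_zero,
    sub_zero] at hparts
  exact hparts

end Calculus

section BSolution

variable {B u u' v v' : ℝ → ℝ}

theorem IsBSolution.continuousOn (hu : IsBSolution B u u') : ContinuousOn u (Icc 0 1) :=
  fun x hx => (hu.1 x hx).continuousWithinAt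

theorem IsBSolution.hasDerivWithinAt_quasiDeriv (hB : ContinuousOn B (Icc 0 1))
    (hu : IsBSolution B u u') {x : ℝ} (hx : x ∈ Icc (0:ℝ) 1) :
    HasDerivWithinAt (fun y => u' y - u y * B y) (-(u' x * B x)) (Icc 0 1) x := by
  have hquasi : ∀ y ∈ Icc (0:ℝ) 1, u' y - u y * B y = u' 0 - ∫ z in (0:ℝ)..y, u' z * B z :=
    fun y hy => by linarith [hu.2.2 y hy]
  exact ((hasDerivWithinAt_integral_Icc (hu.2.1.fun_mul hB) hx).const_sub _).congr hquasi
    (hquasi x hx)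

/-- The Wronskian equals the quasi-Wronskian `(u' - uB) v - u (v' - vB)`, whose derivative
vanishes. -/
theorem IsBSolution.wronskian_eq (hB : ContinuousOn B (Icc 0 1))
    (hu : IsBSolution B u u') (hv : IsBSolution B v v') {x : ℝ} (hx : x ∈ Icc (0:ℝ) 1) :
    u' x * v x - u x * v' x = u' 0 * v 0 - u 0 * v' 0 := by
  set W : ℝ → ℝ := fun y => (u' y - u y * B y) * v y - u y * (v' y - v y * B y)
  have hW : ∀ y ∈ Icc (0:ℝ) 1, HasDerivWithinAt W 0 (Icc 0 1) y := fun y hy => by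
    refine (((hu.hasDerivWithinAt_quasiDeriv hB hy).fun_mul (hv.1 y hy)).fun_sub
      ((hu.1 y hy).fun_mul (hv.hasDerivWithinAt_quasiDeriv hB hy))).congr_deriv ?_
    ring
  have hconst := constant_of_derivWithin_zero (fun y hy => (hW y hy).differentiableWithinAt)
    (fun y hy => (hW y (Ico_subset_Icc_self hy)).derivWithin
      (uniqueDiffOn_Icc zero_lt_one y (Ico_subset_Icc_self hy))) x hx
  simp only [W] at hconst
  linear_combination hconst

end BSolution

section GreenOperator

variable {B u u' v v' f : ℝ → ℝ} {α : ℝ}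

theorem greenOp_hasDerivWithinAt (hu : IsBSolution B u u') (hv : IsBSolution B v v')
    (hf : ContinuousOn f (Icc 0 1)) {x : ℝ} (hx : x ∈ Icc (0:ℝ) 1) :
    HasDerivWithinAt (greenOp α u v f) (greenOpDeriv α u u' v v' f x) (Icc 0 1) x := by
  refine (((hv.1 x hx).fun_mul
    (hasDerivWithinAt_integral_Icc (hu.continuousOn.fun_mul hf) hx)).fun_add
    ((hu.1 x hx).fun_mul
    (hasDerivWithinAt_integral_Icc_left (hv.continuousOn.fun_mul hf) hx))).const_mul α⁻¹
    |>.congr_deriv ?_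
  simp only [greenOpDeriv]
  ring

theorem continuousOn_greenOpDeriv (hu : IsBSolution B u u') (hv : IsBSolution B v v')
    (hf : ContinuousOn f (Icc 0 1)) : ContinuousOn (greenOpDeriv α u u' v v' f) (Icc 0 1) := by
  have hP : ContinuousOn (fun z => ∫ y in (0:ℝ)..z, u y * f y) (Icc 0 1) := fun x hx =>
    (hasDerivWithinAt_integral_Icc (hu.continuousOn.fun_mul hf) hx).continuousWithinAt
  have hQ : ContinuousOn (fun z => ∫ y in z..(1:ℝ), v y * f y) (Icc 0 1) := fun x hx =>
    (hasDerivWithinAt_integral_Icc_left (hv.continuousOn.fun_mul hf) hx).continuousWithinAt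
  exact continuousOn_const.mul ((hv.2.1.fun_mul hP).fun_add (hu.2.1.fun_mul hQ))

/-- This is `-(Tf)'' + B'·Tf = f` in quasi-derivative form; the constant Wronskian produces
the `f`. -/
theorem greenOp_hasDerivWithinAt_quasiDeriv (hB : ContinuousOn B (Icc 0 1))
    (hu : IsBSolution B u u') (hv : IsBSolution B v v')
    (hαdef : α = u' 0 * v 0 - u 0 * v' 0) (hα : α ≠ 0)
    (hf : ContinuousOn f (Icc 0 1)) {x : ℝ} (hx : x ∈ Icc (0:ℝ) 1) :
    HasDerivWithinAt (fun y => greenOpDeriv α u u' v v' f y - greenOp α u v f y * B y)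
      (-(B x * greenOpDeriv α u u' v v' f x + f x)) (Icc 0 1) x := by
  have hd := (((hv.hasDerivWithinAt_quasiDeriv hB hx).fun_mul
    (hasDerivWithinAt_integral_Icc (hu.continuousOn.fun_mul hf) hx)).fun_add
    ((hu.hasDerivWithinAt_quasiDeriv hB hx).fun_mul
    (hasDerivWithinAt_integral_Icc_left (hv.continuousOn.fun_mul hf) hx))).const_mul α⁻¹
  refine (hd.congr_of_mem (fun y _ => ?_) hx).congr_deriv ?_
  · simp only [greenOp, greenOpDeriv]
    ring
  · have hwr := hu.wronskian_eq hB hv hx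
    rw [← hαdef] at hwr
    simp only [greenOpDeriv]
    linear_combination (-(α⁻¹ * f x)) * hwr - f x * mul_inv_cancel₀ hα

end GreenOperator

namespace MemH1

variable {h g : ℝ → ℝ}

theorem intervalIntegrable (hh : MemH1 h g) : IntervalIntegrable g volume 0 1 :=
  (intervalIntegrable_iff_integrableOn_Icc_of_le zero_le_one).2 hh.1

theorem continuousOn (hh : MemH1 h g) : ContinuousOn h (Icc 0 1) := by
  have := continuousOn_primitive_interval (μ := volume) (a := (0:ℝ)) (b := 1) (f := g)
    (by rw [uIcc_of_le zero_le_one]; exact hh.1)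
  rw [uIcc_of_le zero_le_one] at this
  exact this.congr hh.2.2

theorem ae_eq_of_hasDerivWithinAt (hh : MemH1 h g) {h' : ℝ → ℝ}
    (hd : ∀ x ∈ Icc (0:ℝ) 1, HasDerivWithinAt h (h' x) (Icc 0 1) x) :
    ∀ᵐ x, x ∈ Ioc (0:ℝ) 1 → g x = h' x := by
  filter_upwards [hh.intervalIntegrable.ae_hasDerivAt_integral, Measure.ae_ne volume 1]
    with x hprim hx1 hxI
  have hxI' : x ∈ Ioo (0:ℝ) 1 := ⟨hxI.1, lt_of_le_of_ne hxI.2 hx1⟩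
  have hnhds : Icc (0:ℝ) 1 ∈ nhds x := Icc_mem_nhds hxI'.1 hxI'.2
  have hg : HasDerivAt h (g x) x :=
    (hprim (by rw [uIcc_of_le zero_le_one]; exact Ioo_subset_Icc_self hxI') 0
      left_mem_uIcc).congr_of_eventuallyEq (Filter.mem_of_superset hnhds hh.2.2)
  exact hg.unique ((hd x (Ioo_subset_Icc_self hxI')).hasDerivAt hnhds)

theorem integral_mul_eq_neg_integral_mul {φ D : ℝ → ℝ} (hh : MemH1 h g)
    (hφ : ∀ x ∈ Icc (0:ℝ) 1, HasDerivWithinAt φ (D x) (Icc 0 1) x)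
    (hD : ContinuousOn D (Icc 0 1)) :
    ∫ x in (0:ℝ)..1, φ x * g x = -∫ x in (0:ℝ)..1, D x * h x := by
  rw [integral_mul_eq_sub_integral_mul_primitive zero_le_one hφ hD hh.intervalIntegrable,
    hh.2.1, mul_zero, zero_sub]
  congr 1
  refine integral_congr fun x hx => ?_
  rw [uIcc_of_le zero_le_one] at hx
  rw [hh.2.2 x hx]

end MemH1

theorem Eform_congr_ae {B f f' f₁ f₁' h h' : ℝ → ℝ}
    (hf : ∀ᵐ x, x ∈ Ioc (0:ℝ) 1 → f x = f₁ x) (hf' : ∀ᵐ x, x ∈ Ioc (0:ℝ) 1 → f' x = f₁' x) :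
    Eform B f f' h h' = Eform B f₁ f₁' h h' := by
  rw [← uIoc_of_le zero_le_one] at hf hf'
  unfold Eform
  congr 1
  · exact integral_congr_ae (by filter_upwards [hf'] with x hx hxI; rw [hx hxI])
  · exact integral_congr_ae (by filter_upwards [hf, hf'] with x hx hx' hxI; rw [hx hxI, hx' hxI])

theorem Eform_const_mul (B f f' h h' : ℝ → ℝ) (c : ℝ) :
    Eform B (fun x => c * f x) (fun x => c * f' x) h h' = c * Eform B f f' h h' := by
  unfold Eform
  simp only [mul_assoc, ← mul_add, intervalIntegral.integral_const_mul]
  ring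

/-- Green's identity: integrate by parts against the quasi-derivative `(Tf)' - (Tf) B`, after
which the `B`-terms of `E` cancel. -/
theorem Eform_greenOp {B u u' v v' f h g : ℝ → ℝ} {α : ℝ} (hB : ContinuousOn B (Icc 0 1))
    (hu : IsBSolution B u u') (hv : IsBSolution B v v')
    (hαdef : α = u' 0 * v 0 - u 0 * v' 0) (hα : α ≠ 0)
    (hf : ContinuousOn f (Icc 0 1)) (hh : MemH1 h g) :
    Eform B (greenOp α u v f) (greenOpDeriv α u u' v v' f) h g = ∫ x in (0:ℝ)..1, f x * h x := by
  set W := greenOp α u v f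
  set W' := greenOpDeriv α u u' v v' f
  have hW : ContinuousOn W (Icc 0 1) := fun x hx =>
    (greenOp_hasDerivWithinAt hu hv hf hx).continuousWithinAt
  have hW' : ContinuousOn W' (Icc 0 1) := continuousOn_greenOpDeriv hu hv hf
  have hg := hh.intervalIntegrable
  have hcont : ∀ {c : ℝ → ℝ}, ContinuousOn c (Icc 0 1) → ContinuousOn c (uIcc 0 1) := by
    intro c hc; rwa [uIcc_of_le zero_le_one]
  calc Eform B W W' h g
      = ∫ x in (0:ℝ)..1, W' x * g x - (W' x * h x + W x * g x) * B x := by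
        rw [Eform, integral_sub (hg.continuousOn_mul (hcont hW'))]
        have := (hg.continuousOn_mul (hcont (hW.fun_mul hB))).add
          (hcont ((hW'.fun_mul hh.continuousOn).fun_mul hB)).intervalIntegrable
        exact this.congr (fun x _ => by ring)
    _ = (∫ x in (0:ℝ)..1, (W' x - W x * B x) * g x) - ∫ x in (0:ℝ)..1, B x * W' x * h x := by
        rw [← integral_sub (hg.continuousOn_mul (hcont (hW'.fun_sub (hW.fun_mul hB))))
          (hcont ((hB.fun_mul hW').fun_mul hh.continuousOn)).intervalIntegrable]
        exact integral_congr fun x _ => by ring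
    _ = (∫ x in (0:ℝ)..1, (B x * W' x + f x) * h x) - ∫ x in (0:ℝ)..1, B x * W' x * h x := by
        rw [hh.integral_mul_eq_neg_integral_mul
          (fun x hx => greenOp_hasDerivWithinAt_quasiDeriv hB hu hv hαdef hα hf hx)
          ((hB.fun_mul hW').fun_add hf).neg]
        simp only [neg_mul, intervalIntegral.integral_neg, neg_neg]
        rfl
    _ = ∫ x in (0:ℝ)..1, f x * h x := by
        rw [← integral_sub
          (hcont (((hB.fun_mul hW').fun_add hf).fun_mul hh.continuousOn)).intervalIntegrable
          (hcont ((hB.fun_mul hW').fun_mul hh.continuousOn)).intervalIntegrable]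
        exact integral_congr fun x _ => by ring

theorem green_eigen_transfer_general (B u u' v v' : ℝ → ℝ)
    (hB : ContinuousOn B (Set.Icc 0 1))
    (hu : IsBSolution B u u') (hv : IsBSolution B v v')
    (α : ℝ) (hαdef : α = u' 0 * v 0 - u 0 * v' 0) (hα : α ≠ 0)
    (e ge : ℝ → ℝ) (he : MemH1 e ge)
    (β : ℝ) (hβ : β ≠ 0)
    (heig : ∀ x ∈ Set.Icc (0:ℝ) 1, greenOp α u v e x = β * e x) :
    ∀ h g : ℝ → ℝ, MemH1 h g →
      Eform B e ge h g = β⁻¹ * ∫ x in (0:ℝ)..1, e x * h x := by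
  intro h g hh
  have he_eq : ∀ x ∈ Icc (0:ℝ) 1, e x = β⁻¹ * greenOp α u v e x := fun x hx => by
    rw [heig x hx, inv_mul_cancel_left₀ hβ]
  have hge_eq : ∀ᵐ x, x ∈ Ioc (0:ℝ) 1 → ge x = β⁻¹ * greenOpDeriv α u u' v v' e x :=
    he.ae_eq_of_hasDerivWithinAt fun x hx =>
      ((greenOp_hasDerivWithinAt hu hv he.continuousOn hx).const_mul β⁻¹).congr_of_mem he_eq hx
  calc Eform B e ge h g
      = Eform B (fun x => β⁻¹ * greenOp α u v e x)
          (fun x => β⁻¹ * greenOpDeriv α u u' v v' e x) h g :=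
        Eform_congr_ae (ae_of_all _ fun x hx => he_eq x (Ioc_subset_Icc_self hx)) hge_eq
    _ = β⁻¹ * ∫ x in (0:ℝ)..1, e x * h x := by
        rw [Eform_const_mul, Eform_greenOp hB hu hv hαdef hα he.continuousOn hh]

/-- If `e ∈ H1` is an eigenfunction of the Green operator `T` with eigenvalue `β ≠ 0`,
then `1/β` is an eigenvalue of `L`: `E(e,h) = β⁻¹·∫_0^1 e h` for all `h ∈ H1`. -/
theorem green_eigen_transfer (B u u' v v' : ℝ → ℝ)
    (hB : ContinuousOn B (Set.Icc 0 1)) (hB0 : B 0 = 0)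
    (hu : IsBSolution B u u') (hv : IsBSolution B v v')
    (hu0 : u 0 = 0) (hu1 : u 1 = 1) (hv0 : v 0 = 1) (hv1 : v 1 = 0)
    (α : ℝ) (hαdef : α = u' 0 * v 0 - u 0 * v' 0) (hα : α ≠ 0)
    (e ge : ℝ → ℝ) (he : MemH1 e ge)
    (β : ℝ) (hβ : β ≠ 0)
    (heig : ∀ x ∈ Set.Icc (0:ℝ) 1, greenOp α u v e x = β * e x) :
    ∀ h g : ℝ → ℝ, MemH1 h g →
      Eform B e ge h g = β⁻¹ * ∫ x in (0:ℝ)..1, e x * h x :=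
  green_eigen_transfer_general B u u' v v' hB hu hv α hαdef hα e ge he β hβ heig
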